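/- Let 0 < α ≤ √2 − 1. Then the probability generating function of any ℕ-valued random variable X satisfying the recursive distributional equation is G(s) = (1/2)((1+α)s + 1 − α + √(((1+α)s + 1 − α)² − 4s·exp(α(s−1)))) for all s ∈ [0,1]. -/

import Mathlib

open scoped ENNReal

/-- The Poisson(α) probability mass function on ℕ. -/
noncomputable def poissonPMF (α : ℝ) (k : ℕ) : ℝ≥0∞ :=
  ENNReal.ofReal (Real.exp (-α) * α ^ k / (Nat.factorial k))

/-- The Geometric(1/2) pmf: P(N = k) = (1/2)^(k+1) for k ≥ 0. -/
noncomputable def geomHalf (k : ℕ) : ℝ≥0∞ := (1 / 2) ^ (k + 1)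

/-- The law of (X - 1)⁺ when X has law μ on ℕ. -/
noncomputable def shiftLaw (μ : ℕ → ℝ≥0∞) (k : ℕ) : ℝ≥0∞ :=
  if k = 0 then μ 0 + μ 1 else μ (k + 1)

/-- Convolution of two (sub-)pmfs on ℕ: the law of an independent sum. -/
noncomputable def convAdd (f g : ℕ → ℝ≥0∞) (k : ℕ) : ℝ≥0∞ :=
  ∑ j ∈ Finset.range (k + 1), f j * g (k - j)

/-- n-fold convolution of a pmf on ℕ: the law of a sum of n i.i.d. copies. -/
noncomputable def iterConv (f : ℕ → ℝ≥0∞) : ℕ → ℕ → ℝ≥0∞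
  | 0 => fun k => if k = 0 then 1 else 0
  | n + 1 => convAdd (iterConv f n) f

/-- μ is the law of an ℕ-valued random variable X satisfying the RDE
    X =_d P + ∑_{i=1}^N (X_i - 1)⁺, with P ~ Poisson(α), N ~ Geom(1/2),
    X_i i.i.d. with law μ, all independent. -/
def SatisfiesRDE (α : ℝ) (μ : ℕ → ℝ≥0∞) : Prop :=
  (∑' k, μ k) = 1 ∧
  ∀ k, μ k = ∑' n, geomHalf n * convAdd (poissonPMF α) (iterConv (shiftLaw μ) n) k

/-- The probability generating function G(s) = E[s^X]. -/
noncomputable def pgf (μ : ℕ → ℝ≥0∞) (s : ℝ) : ℝ := ∑' k, (μ k).toReal * s ^ k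

/-- The mean E[X] = ∑ k · P(X = k), valued in [0,∞]. -/
noncomputable def meanENN (μ : ℕ → ℝ≥0∞) : ℝ≥0∞ := ∑' k : ℕ, (k : ℝ≥0∞) * μ k

/-!
Let `H` be the generating function of `(X - 1)⁺`. Summing over the geometric number of
summands gives `G (2 - H) = e^{α(s-1)}`, and `s H = G - p + p s`; eliminating `H`, the pgf `G` is
a root of `G² - ((2 - p) s + p) G + s e^{α(s-1)} = 0`. Its discriminant can stay nonnegative as
`s ↑ 1` only if `p ≥ 1 - α`, and then, for `α ≤ √2 - 1`, it is positive on `[0, 1)`; by continuity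
`G` keeps the branch `+√` on which it starts at `s = 0`. On that branch `G ≤ 1` forces
`p ≤ 1 - α`, so `p = 1 - α`.
-/

section GeneratingFunctions

open Finset

theorem ENNReal.tsum_mul_tsum_eq_tsum_sum_range (f g : ℕ → ℝ≥0∞) :
    (∑' n, f n) * (∑' n, g n) = ∑' n, ∑ k ∈ range (n + 1), f k * g (n - k) := by
  simp_rw [← Nat.sum_antidiagonal_eq_sum_range_succ fun k l => f k * g l]
  calc (∑' i, f i) * ∑' j, g j
      = ∑' p : ℕ × ℕ, f p.1 * g p.2 := by
        rw [ENNReal.tsum_prod (f := fun i j => f i * g j), ← ENNReal.tsum_mul_right]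
        simp_rw [← ENNReal.tsum_mul_left]
    _ = ∑' x : Σ n, antidiagonal n, f x.2.1.1 * g x.2.1.2 :=
        (HasAntidiagonal.sigmaAntidiagonalEquivProd.tsum_eq (fun p => f p.1 * g p.2)).symm
    _ = ∑' n, ∑ kl ∈ antidiagonal n, f kl.1 * g kl.2 := by
        simp_rw [ENNReal.tsum_sigma', tsum_subtype (antidiagonal _) fun kl => f kl.1 * g kl.2]

-- Both sides are `∞` when `2 ≤ H`.
theorem tsum_geomHalf_mul_pow (H : ℝ≥0∞) : ∑' n, geomHalf n * H ^ n = (2 - H)⁻¹ := by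
  have h2 : (2 : ℝ≥0∞) - H = 2 * (1 - 2⁻¹ * H) := by
    rw [ENNReal.mul_sub (by simp), ← mul_assoc,
      ENNReal.mul_inv_cancel two_ne_zero ENNReal.ofNat_ne_top, one_mul, mul_one]
  simp_rw [geomHalf, pow_succ', one_div, mul_assoc, ← mul_pow]
  rw [ENNReal.tsum_mul_left, ENNReal.tsum_geometric, h2, ENNReal.mul_inv (by simp) (by simp)]

noncomputable def pgfENN (f : ℕ → ℝ≥0∞) (σ : ℝ≥0∞) : ℝ≥0∞ := ∑' k, f k * σ ^ k

theorem pgfENN_convAdd (f g : ℕ → ℝ≥0∞) (σ : ℝ≥0∞) :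
    pgfENN (convAdd f g) σ = pgfENN f σ * pgfENN g σ := by
  rw [pgfENN, pgfENN, pgfENN, ENNReal.tsum_mul_tsum_eq_tsum_sum_range]
  refine tsum_congr fun n => ?_
  rw [convAdd, sum_mul]
  refine sum_congr rfl fun k hk => ?_
  rw [← Nat.add_sub_of_le (mem_range_succ_iff.mp hk), pow_add, Nat.add_sub_cancel_left]
  ring

theorem pgfENN_iterConv (f : ℕ → ℝ≥0∞) (σ : ℝ≥0∞) (n : ℕ) :
    pgfENN (iterConv f n) σ = pgfENN f σ ^ n := by
  induction n with
  | zero => simp [pgfENN, iterConv, tsum_ite_eq]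
  | succ n ih => rw [iterConv, pgfENN_convAdd, ih, pow_succ]

theorem pgfENN_poissonPMF {α s : ℝ} (hα : 0 ≤ α) (hs : 0 ≤ s) :
    pgfENN (poissonPMF α) (ENNReal.ofReal s) = ENNReal.ofReal (Real.exp (α * (s - 1))) := by
  have hterm (k : ℕ) : poissonPMF α k * ENNReal.ofReal s ^ k
      = ENNReal.ofReal (Real.exp (-α) * ((α * s) ^ k / k.factorial)) := by
    rw [poissonPMF, ← ENNReal.ofReal_pow hs, ← ENNReal.ofReal_mul (by positivity), mul_pow]
    ring_nf
  have hexp : HasSum (fun k : ℕ => (α * s) ^ k / k.factorial) (Real.exp (α * s)) :=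
    Real.exp_eq_exp_ℝ ▸ NormedSpace.expSeries_div_hasSum_exp (α * s)
  simp_rw [pgfENN, hterm]
  rw [← ENNReal.ofReal_tsum_of_nonneg (fun k => by positivity) (hexp.summable.mul_left _),
    tsum_mul_left, hexp.tsum_eq, ← Real.exp_add]
  ring_nf

theorem pgfENN_le_tsum (f : ℕ → ℝ≥0∞) {σ : ℝ≥0∞} (hσ : σ ≤ 1) : pgfENN f σ ≤ ∑' k, f k :=
  ENNReal.tsum_le_tsum fun k => mul_le_of_le_one_right' (pow_le_one' hσ k)

theorem tsum_shiftLaw (μ : ℕ → ℝ≥0∞) : ∑' k, shiftLaw μ k = ∑' k, μ k := by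
  rw [tsum_eq_zero_add' ENNReal.summable, tsum_eq_zero_add' (f := μ) ENNReal.summable,
    tsum_eq_zero_add' (f := fun k => μ (k + 1)) ENNReal.summable]
  simp [shiftLaw, add_assoc]

theorem pgfENN_shiftLaw (μ : ℕ → ℝ≥0∞) (σ : ℝ≥0∞) :
    σ * pgfENN (shiftLaw μ) σ + μ 0 = pgfENN μ σ + μ 0 * σ := by
  rw [pgfENN, pgfENN, tsum_eq_zero_add' ENNReal.summable,
    tsum_eq_zero_add' (f := fun k => μ k * σ ^ k) ENNReal.summable,
    tsum_eq_zero_add' (f := fun k => μ (k + 1) * σ ^ (k + 1)) ENNReal.summable, mul_add,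
    ← ENNReal.tsum_mul_left]
  simp only [shiftLaw, Nat.add_eq_zero_iff, one_ne_zero, and_false, if_true, if_false, pow_zero,
    mul_one, zero_add, ← mul_assoc, mul_comm σ, pow_succ]
  ring

theorem SatisfiesRDE.pgfENN_eq {α : ℝ} {μ : ℕ → ℝ≥0∞} (hμ : SatisfiesRDE α μ) (σ : ℝ≥0∞) :
    pgfENN μ σ = pgfENN (poissonPMF α) σ * (2 - pgfENN (shiftLaw μ) σ)⁻¹ := by
  calc pgfENN μ σ
      = ∑' n, geomHalf n * pgfENN (convAdd (poissonPMF α) (iterConv (shiftLaw μ) n)) σ := by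
        simp_rw [pgfENN, ← ENNReal.tsum_mul_left]
        rw [ENNReal.tsum_comm]
        refine tsum_congr fun k => ?_
        rw [hμ.2 k, ← ENNReal.tsum_mul_right]
        simp_rw [mul_assoc]
    _ = pgfENN (poissonPMF α) σ * ∑' n, geomHalf n * pgfENN (shiftLaw μ) σ ^ n := by
        simp_rw [pgfENN_convAdd, pgfENN_iterConv, ← ENNReal.tsum_mul_left, mul_left_comm]
    _ = _ := by rw [tsum_geomHalf_mul_pow]

variable {μ : ℕ → ℝ≥0∞}

theorem pgf_eq_toReal_pgfENN (hμ : ∀ k, μ k ≠ ⊤) {s : ℝ} (hs : 0 ≤ s) :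
    pgf μ s = (pgfENN μ (ENNReal.ofReal s)).toReal := by
  rw [pgf, pgfENN, ENNReal.tsum_toReal_eq fun k => ENNReal.mul_ne_top (hμ k) (by simp)]
  simp [ENNReal.toReal_ofReal hs]

theorem pgfENN_le_one (hμ : ∑' k, μ k = 1) {σ : ℝ≥0∞} (hσ : σ ≤ 1) : pgfENN μ σ ≤ 1 :=
  hμ ▸ pgfENN_le_tsum μ hσ

theorem ne_top_of_tsum_eq_one (hμ : ∑' k, μ k = 1) (k : ℕ) : μ k ≠ ⊤ :=
  ne_top_of_le_ne_top ENNReal.one_ne_top (hμ ▸ ENNReal.le_tsum k)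

theorem pgfENN_ne_top (hμ : ∑' k, μ k = 1) {s : ℝ} (hs : s ≤ 1) :
    pgfENN μ (ENNReal.ofReal s) ≠ ⊤ :=
  ne_top_of_le_ne_top ENNReal.one_ne_top (pgfENN_le_one hμ (ENNReal.ofReal_le_one.mpr hs))

theorem mul_pgf_shiftLaw_add (hμ : ∑' k, μ k = 1) {s : ℝ} (hs : s ∈ Set.Icc (0 : ℝ) 1) :
    s * pgf (shiftLaw μ) s + (μ 0).toReal = pgf μ s + (μ 0).toReal * s := by
  have hμ' : ∑' k, shiftLaw μ k = 1 := (tsum_shiftLaw μ).trans hμ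
  have hμ0 : μ 0 ≠ ⊤ := ne_top_of_tsum_eq_one hμ 0
  have h := congrArg ENNReal.toReal (pgfENN_shiftLaw μ (ENNReal.ofReal s))
  rwa [ENNReal.toReal_add (ENNReal.mul_ne_top ENNReal.ofReal_ne_top (pgfENN_ne_top hμ' hs.2)) hμ0,
    ENNReal.toReal_add (pgfENN_ne_top hμ hs.2) (ENNReal.mul_ne_top hμ0 ENNReal.ofReal_ne_top),
    ENNReal.toReal_mul, ENNReal.toReal_mul, ENNReal.toReal_ofReal hs.1,
    ← pgf_eq_toReal_pgfENN (ne_top_of_tsum_eq_one hμ) hs.1,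
    ← pgf_eq_toReal_pgfENN (ne_top_of_tsum_eq_one hμ') hs.1] at h

theorem SatisfiesRDE.pgf_mul_two_sub_pgf_shiftLaw {α : ℝ} (hα : 0 ≤ α)
    (hμ : SatisfiesRDE α μ) {s : ℝ} (hs : s ∈ Set.Icc (0 : ℝ) 1) :
    pgf μ s * (2 - pgf (shiftLaw μ) s) = Real.exp (α * (s - 1)) := by
  set σ := ENNReal.ofReal s
  have hμ' : ∑' k, shiftLaw μ k = 1 := (tsum_shiftLaw μ).trans hμ.1
  have hH : pgfENN (shiftLaw μ) σ ≤ 1 := pgfENN_le_one hμ' (ENNReal.ofReal_le_one.mpr hs.2)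
  have h2H : 2 - pgfENN (shiftLaw μ) σ ≠ 0 :=
    tsub_eq_zero_iff_le.not.2 (hH.trans_lt ENNReal.one_lt_two).not_ge
  have h : pgfENN μ σ * (2 - pgfENN (shiftLaw μ) σ) = pgfENN (poissonPMF α) σ := by
    rw [hμ.pgfENN_eq, mul_assoc, ENNReal.inv_mul_cancel h2H (by finiteness), mul_one]
  have h := congrArg ENNReal.toReal h
  rwa [ENNReal.toReal_mul, ENNReal.toReal_sub_of_le (hH.trans one_le_two) (by finiteness),
    pgfENN_poissonPMF hα hs.1, ENNReal.toReal_ofReal (Real.exp_nonneg _), ENNReal.toReal_ofNat,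
    ← pgf_eq_toReal_pgfENN (ne_top_of_tsum_eq_one hμ.1) hs.1,
    ← pgf_eq_toReal_pgfENN (ne_top_of_tsum_eq_one hμ') hs.1] at h

theorem SatisfiesRDE.pgf_sq_sub_add_eq_zero {α : ℝ} (hα : 0 ≤ α) (hμ : SatisfiesRDE α μ)
    {s : ℝ} (hs : s ∈ Set.Icc (0 : ℝ) 1) :
    pgf μ s ^ 2 - ((2 - (μ 0).toReal) * s + (μ 0).toReal) * pgf μ s
      + s * Real.exp (α * (s - 1)) = 0 := by
  linear_combination (-s) * hμ.pgf_mul_two_sub_pgf_shiftLaw hα hs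
    - pgf μ s * mul_pgf_shiftLaw_add hμ.1 hs

theorem pgf_zero (μ : ℕ → ℝ≥0∞) : pgf μ 0 = (μ 0).toReal := by
  rw [pgf, tsum_eq_single 0 fun k hk => by rw [zero_pow hk, mul_zero]]
  simp

theorem pgf_le_one (hμ : ∑' k, μ k = 1) {s : ℝ} (hs : s ∈ Set.Icc (0 : ℝ) 1) : pgf μ s ≤ 1 := by
  rw [pgf_eq_toReal_pgfENN (ne_top_of_tsum_eq_one hμ) hs.1]
  exact ENNReal.toReal_le_of_le_ofReal zero_le_one
    (ENNReal.ofReal_one ▸ pgfENN_le_one hμ (ENNReal.ofReal_le_one.mpr hs.2))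

theorem continuousOn_pgf (hμ : ∑' k, μ k ≠ ⊤) : ContinuousOn (pgf μ) (Set.Icc (-1 : ℝ) 1) := by
  refine continuousOn_tsum (fun k => (continuous_const.mul (continuous_pow k)).continuousOn)
    (ENNReal.summable_toReal hμ) fun k s hs => ?_
  rw [norm_mul, norm_pow, Real.norm_of_nonneg ENNReal.toReal_nonneg]
  exact mul_le_of_le_one_right ENNReal.toReal_nonneg
    (pow_le_one₀ (norm_nonneg s) (abs_le.mpr hs))

end GeneratingFunctions

open Filter Topology Set

theorem Real.exp_neg_le_one_sub_add_sq_div_two {x : ℝ} (hx : 0 ≤ x) :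
    Real.exp (-x) ≤ 1 - x + x ^ 2 / 2 := by
  have hcubic : 1 + x + x ^ 2 / 2 + x ^ 3 / 6 ≤ Real.exp x := by
    have h := Real.sum_le_exp_of_nonneg hx 4
    norm_num [Finset.sum_range_succ, Nat.factorial] at h
    linarith
  -- `(1 - x + x²/2)(1 + x + x²/2 + x³/6) = 1 + x³/6 + x⁴/12 + x⁵/12 ≥ 1`
  have hprod : 1 ≤ (1 - x + x ^ 2 / 2) * Real.exp x := by
    nlinarith [mul_le_mul_of_nonneg_left hcubic (by nlinarith : (0 : ℝ) ≤ 1 - x + x ^ 2 / 2),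
      pow_nonneg hx 3, pow_nonneg hx 4, pow_nonneg hx 5]
  have hinv : Real.exp (-x) * Real.exp x = 1 := by
    rw [← Real.exp_add, neg_add_cancel, Real.exp_zero]
  nlinarith [mul_le_mul_of_nonneg_left hprod (Real.exp_pos (-x)).le]

theorem nonneg_of_forall_mul_add_mul_sq_nonneg {c K : ℝ}
    (h : ∀ t ∈ Ioo (0 : ℝ) 1, 0 ≤ c * t + K * t ^ 2) : 0 ≤ c := by
  have hlim : Tendsto (fun t => c + K * t) (𝓝[>] 0) (𝓝 c) := by
    have hcont : Continuous fun t : ℝ => c + K * t := by fun_prop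
    simpa using (hcont.tendsto 0).mono_left nhdsWithin_le_nhds
  refine ge_of_tendsto hlim ?_
  filter_upwards [Ioo_mem_nhdsGT one_pos] with t ht
  exact nonneg_of_mul_nonneg_right (by nlinarith [h t ht]) ht.1

theorem sq_sub_four_mul_exp_pos {α s : ℝ} (hα : 0 ≤ α) (hα2 : 2 * α + α ^ 2 ≤ 1)
    (hs : s ∈ Ioo (0 : ℝ) 1) :
    0 < ((1 + α) * s + 1 - α) ^ 2 - 4 * s * Real.exp (α * (s - 1)) := by
  obtain ⟨hs0, hs1⟩ := hs
  have hexp : Real.exp (α * (s - 1)) ≤ 1 - α * (1 - s) + (α * (1 - s)) ^ 2 / 2 := by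
    rw [show α * (s - 1) = -(α * (1 - s)) by ring]
    exact Real.exp_neg_le_one_sub_add_sq_div_two (by nlinarith)
  have hcoef : 0 < 1 - 2 * α - α ^ 2 + 2 * α ^ 2 * (1 - s) := by
    rcases hα.eq_or_lt with rfl | hα0
    · norm_num
    · nlinarith [mul_pos (pow_pos hα0 2) (sub_pos.2 hs1)]
  nlinarith [mul_le_mul_of_nonneg_left hexp (by linarith : (0 : ℝ) ≤ 4 * s),
    mul_pos (pow_pos (sub_pos.2 hs1) 2) hcoef]

section Quadratic

variable {α p : ℝ} {G : ℝ → ℝ}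

theorem one_sub_le_of_forall_sq_sub_add_eq_zero
    (hG : ∀ s ∈ Icc (0 : ℝ) 1,
      G s ^ 2 - ((2 - p) * s + p) * G s + s * Real.exp (α * (s - 1)) = 0) :
    1 - α ≤ p := by
  suffices h : 0 ≤ 4 * (p + α - 1) by linarith
  refine nonneg_of_forall_mul_add_mul_sq_nonneg (K := (2 - p) ^ 2 - 4 * α) fun t ht => ?_
  have hquad := hG (1 - t) ⟨by linarith [ht.2], by linarith [ht.1]⟩
  have hexp : 1 - α * t ≤ Real.exp (α * (1 - t - 1)) := by
    rw [show α * (1 - t - 1) = -(α * t) by ring]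
    exact Real.one_sub_le_exp_neg _
  nlinarith [sq_nonneg (2 * G (1 - t) - ((2 - p) * (1 - t) + p)),
    mul_le_mul_of_nonneg_left hexp (by linarith [ht.2] : (0 : ℝ) ≤ 4 * (1 - t))]

theorem le_one_sub_of_forall_sq_sub_add_eq_zero (hα : 0 ≤ α)
    (hG1 : ∀ s ∈ Icc (0 : ℝ) 1, G s ≤ 1)
    (hroot : ∀ s ∈ Icc (0 : ℝ) 1, 0 ≤ 2 * G s - ((2 - p) * s + p))
    (hG : ∀ s ∈ Icc (0 : ℝ) 1,
      G s ^ 2 - ((2 - p) * s + p) * G s + s * Real.exp (α * (s - 1)) = 0) :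
    p ≤ 1 - α := by
  suffices h : 0 ≤ 4 * (1 - α - p) by linarith
  refine nonneg_of_forall_mul_add_mul_sq_nonneg (K := 4 * α + 2 * α ^ 2) fun t ht => ?_
  obtain ⟨ht0, ht1⟩ := ht
  have hs : 1 - t ∈ Icc (0 : ℝ) 1 := ⟨by linarith, by linarith⟩
  -- with `b = (2 - p) (1 - t) + p`, `G ≤ 1` gives `2 G - b ≤ 2 - b = (2 - p) t`
  have hsq : (2 * G (1 - t) - ((2 - p) * (1 - t) + p)) ^ 2 ≤ ((2 - p) * t) ^ 2 :=
    pow_le_pow_left₀ (hroot _ hs) (by linarith [hG1 _ hs]) 2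
  have hexp : Real.exp (α * (1 - t - 1)) ≤ 1 - α * t + (α * t) ^ 2 / 2 := by
    rw [show α * (1 - t - 1) = -(α * t) by ring]
    exact Real.exp_neg_le_one_sub_add_sq_div_two (by positivity)
  nlinarith [hG _ hs, mul_le_mul_of_nonneg_left hexp (by linarith : (0 : ℝ) ≤ 4 * (1 - t)),
    mul_nonneg (sq_nonneg α) (pow_nonneg ht0.le 3)]

theorem two_mul_sub_eq_sqrt_of_forall_sq_sub_add_eq_zero (hα : 0 ≤ α)
    (hα2 : 2 * α + α ^ 2 ≤ 1) (hcont : ContinuousOn G (Ico 0 1)) (hG0 : G 0 = p)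
    (hG : ∀ s ∈ Icc (0 : ℝ) 1,
      G s ^ 2 - ((2 - p) * s + p) * G s + s * Real.exp (α * (s - 1)) = 0) :
    ∀ s ∈ Icc (0 : ℝ) 1, 2 * G s - ((2 - p) * s + p) =
      √(((2 - p) * s + p) ^ 2 - 4 * s * Real.exp (α * (s - 1))) := by
  have hp := one_sub_le_of_forall_sq_sub_add_eq_zero hG
  have hsq (s : ℝ) (hs : s ∈ Icc (0 : ℝ) 1) : (2 * G s - ((2 - p) * s + p)) ^ 2 =
      ((2 - p) * s + p) ^ 2 - 4 * s * Real.exp (α * (s - 1)) := by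
    linear_combination 4 * hG s hs
  have hdisc (s : ℝ) (hs : s ∈ Ico (0 : ℝ) 1) :
      0 < ((2 - p) * s + p) ^ 2 - 4 * s * Real.exp (α * (s - 1)) := by
    rcases hs.1.eq_or_lt with rfl | hs0
    · nlinarith
    · have hb : (1 + α) * s + 1 - α ≤ (2 - p) * s + p := by nlinarith [hs.2]
      have hb0 : 0 ≤ (1 + α) * s + 1 - α := by nlinarith [hs.2]
      nlinarith [sq_sub_four_mul_exp_pos hα hα2 ⟨hs0, hs.2⟩, pow_le_pow_left₀ hb0 hb 2]
  intro s hs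
  rcases hs.2.eq_or_lt with rfl | hs1
  · have h : (2 * G 1 - ((2 - p) * 1 + p)) ^ 2 = 0 := by rw [hsq 1 hs]; norm_num
    rw [pow_eq_zero_iff two_ne_zero] at h
    rw [h, sub_self, mul_zero, Real.exp_zero]
    ring_nf
    simp
  refine isPreconnected_Ico.eq_of_sq_eq (f := fun s => 2 * G s - ((2 - p) * s + p))
    (g := fun s => √(((2 - p) * s + p) ^ 2 - 4 * s * Real.exp (α * (s - 1))))
    (by fun_prop) (by fun_prop) (fun t ht => ?_)
    (fun hs => (Real.sqrt_pos.2 (hdisc _ hs)).ne') (left_mem_Ico.2 one_pos) ?_ ⟨hs.1, hs1⟩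
  · simp only [Pi.pow_apply, hsq t (Ico_subset_Icc_self ht), Real.sq_sqrt (hdisc t ht).le]
  · have hp0 : 0 ≤ p := by nlinarith
    simp only [hG0, mul_zero, zero_mul, zero_add, sub_zero, Real.sqrt_sq hp0]
    ring

theorem eq_of_forall_sq_sub_add_eq_zero (hα : 0 ≤ α) (hα2 : 2 * α + α ^ 2 ≤ 1)
    (hcont : ContinuousOn G (Ico 0 1)) (hG0 : G 0 = p) (hG1 : ∀ s ∈ Icc (0 : ℝ) 1, G s ≤ 1)
    (hG : ∀ s ∈ Icc (0 : ℝ) 1,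
      G s ^ 2 - ((2 - p) * s + p) * G s + s * Real.exp (α * (s - 1)) = 0) :
    ∀ s ∈ Icc (0 : ℝ) 1, G s = (1 / 2) * ((1 + α) * s + 1 - α +
      √(((1 + α) * s + 1 - α) ^ 2 - 4 * s * Real.exp (α * (s - 1)))) := by
  have hroot := two_mul_sub_eq_sqrt_of_forall_sq_sub_add_eq_zero hα hα2 hcont hG0 hG
  have hp : p = 1 - α := le_antisymm
    (le_one_sub_of_forall_sq_sub_add_eq_zero hα hG1
      (fun s hs => hroot s hs ▸ Real.sqrt_nonneg _) hG)
    (one_sub_le_of_forall_sq_sub_add_eq_zero hG)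
  intro s hs
  have h := hroot s hs
  rw [hp, show (2 - (1 - α)) * s + (1 - α) = (1 + α) * s + 1 - α by ring] at h
  linarith

end Quadratic

/-- For 0 < α ≤ √2 − 1, the pgf of any X satisfying the RDE is
G(s) = (1/2)((1+α)s + 1 − α + √(((1+α)s + 1 − α)² − 4s·exp(α(s−1)))) for s ∈ [0,1]. -/
theorem pgf_formula_small_alpha
    (α : ℝ) (hα0 : 0 < α) (hα1 : α ≤ Real.sqrt 2 - 1)
    (μ : ℕ → ℝ≥0∞) (hμ : SatisfiesRDE α μ) :
    ∀ s ∈ Set.Icc (0 : ℝ) 1,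
      pgf μ s = (1 / 2) * ((1 + α) * s + 1 - α +
        Real.sqrt (((1 + α) * s + 1 - α) ^ 2 - 4 * s * Real.exp (α * (s - 1)))) := by
  have hα2 : 2 * α + α ^ 2 ≤ 1 := by
    nlinarith [Real.sq_sqrt (zero_le_two : (0 : ℝ) ≤ 2), Real.sqrt_nonneg 2]
  have hcont : ContinuousOn (pgf μ) (Ico 0 1) :=
    (continuousOn_pgf (hμ.1 ▸ ENNReal.one_ne_top)).mono
      (Ico_subset_Icc_self.trans (Icc_subset_Icc_left (by norm_num)))
  exact eq_of_forall_sq_sub_add_eq_zero hα0.le hα2 hcont (pgf_zero μ)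
    (fun s hs => pgf_le_one hμ.1 hs) (fun s hs => hμ.pgf_sq_sub_add_eq_zero hα0.le hs)
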